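/- arXiv:2605.23405 — 3 statements merged into one kernel-verified Lean document; each statement's English description precedes it below -/
import Mathlib

section
/- Let T ⊂ ℝ² be a bounded open set, x_T ∈ T, and k ≥ 0 an integer. The map div : (x − x_T)·ℙ^{k+1}(T) → ℙ^{k+1}(T), where (x − x_T)·ℙ^{k+1}(T) = { (x − x_T) q : q ∈ ℙ^{k+1}(T) }, is a linear isomorphism. Here for q a scalar polynomial of total degree ≤ k+1, div((x − x_T)q) = 2q + (x − x_T)·∇q. -/
/-!
Substituting `x ↦ x + x_T` conjugates `q ↦ 2q + (x - x_T) · ∇q` into the operator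
`p ↦ 2p + x · ∇p` centred at the origin. That operator multiplies the monomial `x^s` by
`2 + |s| > 0`, so it is diagonal with nonzero eigenvalues in the monomial basis: it is
injective, its inverse divides each coefficient by the eigenvalue, and neither raises the
total degree. The substitution preserves total degree as well.
-/

open MvPolynomial

namespace MvPolynomial

variable {R K σ τ : Type*}

section Shift

theorem totalDegree_aeval_le [CommSemiring R] {f : σ → MvPolynomial τ R}
    (hf : ∀ i, (f i).totalDegree ≤ 1) (p : MvPolynomial σ R) :
    (aeval f p).totalDegree ≤ p.totalDegree := by
  conv_lhs => rw [p.as_sum]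
  rw [map_sum]
  refine totalDegree_finsetSum_le fun v hv => le_trans ?_ (le_totalDegree hv)
  rw [aeval_monomial, ← Algebra.smul_def]
  refine (totalDegree_smul_le _ _).trans <| (totalDegree_finsetProd _ _).trans ?_
  exact Finset.sum_le_sum fun i _ =>
    (totalDegree_pow _ _).trans (by simpa using Nat.mul_le_mul_left (v i) (hf i))

theorem totalDegree_X_le_one [CommSemiring R] (i : σ) :
    (X i : MvPolynomial σ R).totalDegree ≤ 1 :=
  (totalDegree_monomial_le _ _).trans (by simp)

theorem totalDegree_X_add_C_le [CommSemiring R] (i : σ) (a : R) :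
    (X i + C a).totalDegree ≤ 1 :=
  (totalDegree_add _ _).trans (by simp [totalDegree_X_le_one])

variable [CommRing R]

theorem totalDegree_X_sub_C_le (i : σ) (a : R) : (X i - C a).totalDegree ≤ 1 :=
  (totalDegree_sub _ _).trans (by simp [totalDegree_X_le_one])

/-- The substitution `p(x) ↦ p(x + c)`. -/
noncomputable def shift (c : σ → R) : MvPolynomial σ R ≃ₐ[R] MvPolynomial σ R :=
  AlgEquiv.ofAlgHom (aeval fun i => X i + C (c i)) (aeval fun i => X i - C (c i))
    (algHom_ext fun i => by simp) (algHom_ext fun i => by simp)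

@[simp]
theorem shift_C (c : σ → R) (a : R) : shift c (C a) = C a :=
  (shift c).commutes a

@[simp]
theorem shift_X (c : σ → R) (i : σ) : shift c (X i) = X i + C (c i) := by
  simp [shift]

theorem shift_X_sub_C (c : σ → R) (i : σ) : shift c (X i - C (c i)) = X i := by
  simp

theorem totalDegree_shift (c : σ → R) (p : MvPolynomial σ R) :
    (shift c p).totalDegree = p.totalDegree := by
  refine le_antisymm (totalDegree_aeval_le (fun i => totalDegree_X_add_C_le i (c i)) p) ?_
  conv_lhs => rw [← (shift c).symm_apply_apply p]
  exact totalDegree_aeval_le (fun i => totalDegree_X_sub_C_le i (c i)) _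

theorem totalDegree_shift_symm (c : σ → R) (p : MvPolynomial σ R) :
    ((shift c).symm p).totalDegree = p.totalDegree := by
  rw [← totalDegree_shift c, AlgEquiv.apply_symm_apply]

theorem pderiv_shift (c : σ → R) (i : σ) (p : MvPolynomial σ R) :
    pderiv i (shift c p) = shift c (pderiv i p) := by
  classical
  induction p using MvPolynomial.induction_on with
  | C a => simp
  | add p q hp hq => simp only [map_add, hp, hq]
  | mul_X p j hp =>
    simp only [map_mul, Derivation.leibniz, hp, shift_X, map_add, pderiv_X, pderiv_C]
    by_cases h : i = j <;> simp [h]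

end Shift

section Euler

variable [CommSemiring R] [Fintype σ]

/-- `p ↦ m • p + x · ∇p`, which is `p ↦ div (x p)` when `m = card σ`. -/
noncomputable def eulerOp (m : ℕ) : MvPolynomial σ R →ₗ[R] MvPolynomial σ R :=
  m • LinearMap.id + ∑ i, LinearMap.mulLeft R (X i) ∘ₗ (pderiv i).toLinearMap

theorem eulerOp_apply (m : ℕ) (p : MvPolynomial σ R) :
    eulerOp m p = m • p + ∑ i, X i * pderiv i p := by
  simp [eulerOp]

omit [Fintype σ] in
theorem coeff_X_mul_pderiv (i : σ) (p : MvPolynomial σ R) (s : σ →₀ ℕ) :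
    coeff s (X i * pderiv i p) = s i • coeff s p := by
  classical
  induction p using MvPolynomial.induction_on' with
  | monomial v a =>
    rw [X_mul_pderiv_monomial, coeff_smul, coeff_monomial]
    split_ifs with h <;> simp [h]
  | add p q hp hq => simp only [map_add, mul_add, coeff_add, hp, hq, smul_add]

theorem coeff_eulerOp (m : ℕ) (p : MvPolynomial σ R) (s : σ →₀ ℕ) :
    coeff s (eulerOp m p) = (m + s.degree) • coeff s p := by
  rw [eulerOp_apply, coeff_add, coeff_smul, coeff_sum]
  simp only [coeff_X_mul_pderiv, ← Finset.sum_smul, Finsupp.degree_eq_sum, add_smul]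

theorem totalDegree_eulerOp_le (m : ℕ) (p : MvPolynomial σ R) :
    (eulerOp m p).totalDegree ≤ p.totalDegree := by
  refine totalDegree_le_of_support_subset fun s hs => ?_
  rw [mem_support_iff] at hs ⊢
  contrapose! hs
  rw [coeff_eulerOp, hs, smul_zero]

end Euler

theorem eulerOp_shift [CommRing R] [Fintype σ] (m : ℕ) (c : σ → R) (q : MvPolynomial σ R) :
    eulerOp m (shift c q) = shift c (m • q + ∑ i, (X i - C (c i)) * pderiv i q) := by
  simp only [eulerOp_apply, map_add, map_nsmul, map_sum, map_mul, shift_X_sub_C,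
    pderiv_shift]

section EulerInv

variable [Field K]

noncomputable def eulerOpInv (m : ℕ) (p : MvPolynomial σ K) : MvPolynomial σ K :=
  ∑ s ∈ p.support, monomial s (coeff s p / (m + s.degree : ℕ))

theorem coeff_eulerOpInv (m : ℕ) (p : MvPolynomial σ K) (s : σ →₀ ℕ) :
    coeff s (eulerOpInv m p) = coeff s p / (m + s.degree : ℕ) := by
  classical
  rw [eulerOpInv, coeff_sum]
  simp only [coeff_monomial]
  rw [Finset.sum_ite_eq']
  split_ifs with h
  · rfl
  · rw [notMem_support_iff.mp h, zero_div]

theorem totalDegree_eulerOpInv_le (m : ℕ) (p : MvPolynomial σ K) :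
    (eulerOpInv m p).totalDegree ≤ p.totalDegree := by
  refine totalDegree_le_of_support_subset fun s hs => ?_
  rw [mem_support_iff] at hs ⊢
  contrapose! hs
  rw [coeff_eulerOpInv, hs, zero_div]

variable [CharZero K] [Fintype σ] {m : ℕ}

theorem eulerOp_eulerOpInv (hm : 0 < m) (p : MvPolynomial σ K) :
    eulerOp m (eulerOpInv m p) = p := by
  ext s
  rw [coeff_eulerOp, coeff_eulerOpInv, nsmul_eq_mul,
    mul_div_cancel₀ _ (Nat.cast_ne_zero.mpr (by omega))]

theorem eulerOp_injective (hm : 0 < m) :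
    Function.Injective (eulerOp m : MvPolynomial σ K → MvPolynomial σ K) := by
  intro p q h
  ext s
  have := congrArg (coeff s) h
  rwa [coeff_eulerOp, coeff_eulerOp, nsmul_eq_mul, nsmul_eq_mul,
    mul_right_inj' (Nat.cast_ne_zero.mpr (by omega))] at this

end EulerInv

end MvPolynomial

theorem stmt_7_general
    (k : ℕ) (xT : Fin 2 → ℝ)
    (D : MvPolynomial (Fin 2) ℝ → MvPolynomial (Fin 2) ℝ)
    (hD : ∀ q, D q = 2 • q + ∑ i : Fin 2, (X i - C (xT i)) * pderiv i q) :
    (∀ q : MvPolynomial (Fin 2) ℝ, q.totalDegree ≤ k + 1 → (D q).totalDegree ≤ k + 1) ∧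
    (∀ q : MvPolynomial (Fin 2) ℝ, q.totalDegree ≤ k + 1 → D q = 0 → q = 0) ∧
    (∀ p : MvPolynomial (Fin 2) ℝ, p.totalDegree ≤ k + 1 →
      ∃ q : MvPolynomial (Fin 2) ℝ, q.totalDegree ≤ k + 1 ∧ D q = p) := by
  have hconj : ∀ q, shift xT (D q) = eulerOp 2 (shift xT q) := fun q => by
    rw [hD, eulerOp_shift]
  refine ⟨fun q hq => ?_, fun q _ hq => ?_, fun p hp => ?_⟩
  · rw [← totalDegree_shift xT, hconj]
    exact (totalDegree_eulerOp_le _ _).trans ((totalDegree_shift xT q).trans_le hq)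
  · have : eulerOp 2 (shift xT q) = eulerOp 2 0 := by rw [← hconj, hq, map_zero, map_zero]
    simpa using eulerOp_injective two_pos this
  · refine ⟨(shift xT).symm (eulerOpInv 2 (shift xT p)), ?_, ?_⟩
    · rw [totalDegree_shift_symm]
      exact (totalDegree_eulerOpInv_le _ _).trans ((totalDegree_shift xT p).trans_le hp)
    · apply (shift xT).injective
      rw [hconj, AlgEquiv.apply_symm_apply, eulerOp_eulerOpInv two_pos]

/-- The divergence is an isomorphism from `(x − x_T)·ℙ^{k+1}(T)` onto `ℙ^{k+1}(T)`:
identifying `(x − x_T)q` with `q`, the map `q ↦ div((x − x_T)q) = 2q + (x − x_T)·∇q`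
preserves the space of polynomials of total degree `≤ k+1`, is injective and surjective. -/
theorem stmt_7
    (k : ℕ) (T : Set (Fin 2 → ℝ)) (hTopen : IsOpen T) (hTbdd : Bornology.IsBounded T)
    (xT : Fin 2 → ℝ) (hxT : xT ∈ T)
    (D : MvPolynomial (Fin 2) ℝ → MvPolynomial (Fin 2) ℝ)
    (hD : ∀ q, D q = 2 • q + ∑ i : Fin 2, (X i - C (xT i)) * pderiv i q) :
    (∀ q : MvPolynomial (Fin 2) ℝ, q.totalDegree ≤ k + 1 → (D q).totalDegree ≤ k + 1) ∧
    (∀ q : MvPolynomial (Fin 2) ℝ, q.totalDegree ≤ k + 1 → D q = 0 → q = 0) ∧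
    (∀ p : MvPolynomial (Fin 2) ℝ, p.totalDegree ≤ k + 1 →
      ∃ q : MvPolynomial (Fin 2) ℝ, q.totalDegree ≤ k + 1 ∧ D q = p) :=
  stmt_7_general k xT D hD
end

section
/- Let E = (a, b) ⊂ ℝ be a segment of length h_E, and k ≥ 0. For v ∈ ℙ^{k+1}(E), define N(v)² := ‖π_E^{k−1} v‖²_{L²(E)} + h_E(|v(a)|² + |v(b)|²), where π_E^{k−1} is the L²(E)-orthogonal projection onto ℙ^{k−1}(E). Then N is a norm on ℙ^{k+1}(E), and there exist constants c, C > 0 depending only on k such that c‖v‖²_{L²(E)} ≤ N(v)² ≤ C‖v‖²_{L²(E)} for all v ∈ ℙ^{k+1}(E). -/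
open Polynomial intervalIntegral

open MeasureTheory

noncomputable def Ppoly {n : ℕ} (x : Fin n → ℝ) : Polynomial ℝ :=
  ∑ i : Fin n, Polynomial.C (x i) * Polynomial.X ^ (i : ℕ)

lemma Ppoly_eval {n : ℕ} (x : Fin n → ℝ) (t : ℝ) :
    (Ppoly x).eval t = ∑ i : Fin n, x i * t ^ (i : ℕ) := by
  rw [Ppoly, Polynomial.eval_finset_sum]
  simp

lemma Ppoly_coeff {n : ℕ} (x : Fin n → ℝ) (m : ℕ) :
    (Ppoly x).coeff m = if h : m < n then x ⟨m, h⟩ else 0 := by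
  rw [Ppoly, Polynomial.finset_sum_coeff]
  simp only [Polynomial.coeff_C_mul, Polynomial.coeff_X_pow, mul_ite, mul_one, mul_zero]
  by_cases h : m < n
  · rw [dif_pos h]
    rw [Finset.sum_eq_single (⟨m, h⟩ : Fin n)]
    · simp
    · intro b _ hb
      simp only [ite_eq_right_iff]
      intro he
      exact absurd (Fin.ext he.symm) hb
    · simp
  · rw [dif_neg h]
    apply Finset.sum_eq_zero
    intro i _
    rw [if_neg]
    rintro rfl
    exact h i.isLt

lemma Ppoly_natDegree {n : ℕ} (x : Fin (n+1) → ℝ) : (Ppoly x).natDegree ≤ n := by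
  rw [Polynomial.natDegree_le_iff_coeff_eq_zero]
  intro m hm
  rw [Ppoly_coeff, dif_neg (by omega)]

lemma Ppoly_ne_zero {n : ℕ} {x : Fin n → ℝ} (hx : x ≠ 0) : Ppoly x ≠ 0 := by
  intro h
  apply hx
  funext i
  have := Ppoly_coeff x i
  rw [h, dif_pos i.isLt] at this
  simpa using this.symm

lemma Ppoly_of_coeff {n : ℕ} (w : Polynomial ℝ) (hw : w.natDegree < n) :
    Ppoly (fun i : Fin n => w.coeff i) = w := by
  ext m
  rw [Ppoly_coeff]
  by_cases h : m < n
  · rw [dif_pos h]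
  · rw [dif_neg h]
    exact (Polynomial.coeff_eq_zero_of_natDegree_lt (by omega)).symm

lemma Ppoly_moment {n : ℕ} (x : Fin n → ℝ) (j : ℕ) :
    ∫ t in (0:ℝ)..1, (Ppoly x).eval t * t ^ j
      = ∑ i : Fin n, x i / ((i : ℕ) + (j : ℕ) + 1) := by
  have h1 : ∀ t : ℝ, (Ppoly x).eval t * t ^ j
      = ∑ i : Fin n, x i * t ^ ((i : ℕ) + j) := by
    intro t
    rw [Ppoly_eval, Finset.sum_mul]
    refine Finset.sum_congr rfl fun i _ => by rw [pow_add]; ring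
  simp_rw [h1]
  rw [intervalIntegral.integral_finset_sum (fun i _ => (by fun_prop :
      Continuous fun t : ℝ => x i * t ^ ((i:ℕ) + j)).intervalIntegrable _ _)]
  refine Finset.sum_congr rfl fun i _ => ?_
  rw [intervalIntegral.integral_const_mul, integral_pow]
  push_cast
  ring

lemma Ppoly_l2 {n : ℕ} (x : Fin n → ℝ) :
    ∫ t in (0:ℝ)..1, ((Ppoly x).eval t) ^ 2
      = ∑ i : Fin n, x i * ∑ l : Fin n, x l / ((l : ℕ) + (i : ℕ) + 1) := by
  have h1 : ∀ t : ℝ, ((Ppoly x).eval t) ^ 2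
      = ∑ i : Fin n, x i * ((Ppoly x).eval t * t ^ (i:ℕ)) := by
    intro t
    rw [sq]
    conv_lhs => rw [Ppoly_eval]
    rw [Finset.sum_mul]
    refine Finset.sum_congr rfl fun i _ => by rw [Ppoly_eval]; ring
  simp_rw [h1]
  rw [intervalIntegral.integral_finset_sum (fun i _ => (by
      have : Continuous fun t : ℝ => (Ppoly x).eval t := by
        exact (Ppoly x).continuous_aeval
      fun_prop :
      Continuous fun t : ℝ => x i * ((Ppoly x).eval t * t ^ (i:ℕ))).intervalIntegrable _ _)]
  refine Finset.sum_congr rfl fun i _ => ?_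
  rw [intervalIntegral.integral_const_mul, Ppoly_moment]

lemma norm_equiv_aux (n : ℕ) (f g : (Fin n → ℝ) → ℝ) (hf : Continuous f) (hg : Continuous g)
    (hfh : ∀ (t : ℝ) x, f (t • x) = t ^ 2 * f x) (hgh : ∀ (t : ℝ) x, g (t • x) = t ^ 2 * g x)
    (hf0 : ∀ x, 0 ≤ f x) (hgpos : ∀ x, x ≠ 0 → 0 < g x) :
    ∃ C : ℝ, 0 < C ∧ ∀ x, f x ≤ C * g x := by
  have hzero : f 0 = 0 ∧ g 0 = 0 := by
    constructor
    · have := hfh 0 0; simpa using this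
    · have := hgh 0 0; simpa using this
  rcases Nat.eq_zero_or_pos n with hn | hn
  · refine ⟨1, one_pos, fun x => ?_⟩
    subst hn
    have hx : x = 0 := funext fun i => absurd i.isLt (by omega)
    rw [hx, hzero.1, hzero.2]; norm_num
  · -- sphere compactness
    have hne : (Metric.sphere (0 : Fin n → ℝ) 1).Nonempty := by
      haveI : Nonempty (Fin n) := ⟨⟨0, hn⟩⟩
      refine ⟨fun _ => 1, ?_⟩
      simp [mem_sphere_iff_norm, pi_norm_const]
    obtain ⟨xM, hxM, hmax⟩ := (isCompact_sphere (0 : Fin n → ℝ) 1).exists_isMaxOn hne hf.continuousOn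
    obtain ⟨xm, hxm, hmin⟩ := (isCompact_sphere (0 : Fin n → ℝ) 1).exists_isMinOn hne hg.continuousOn
    set M := f xM with hM
    set m := g xm with hm
    have hmpos : 0 < m := hgpos xm (by
      intro h; rw [h] at hxm; simp at hxm)
    have hM0 : 0 ≤ M := hf0 xM
    refine ⟨(M + 1) / m, by positivity, fun x => ?_⟩
    by_cases hx : x = 0
    · rw [hx, hzero.1, hzero.2]; norm_num
    · have hnx : (0:ℝ) < ‖x‖ := norm_pos_iff.2 hx
      set u := ‖x‖⁻¹ • x with hu
      have hus : u ∈ Metric.sphere (0 : Fin n → ℝ) 1 := by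
        simp [hu, mem_sphere_iff_norm, norm_smul, abs_of_pos (inv_pos.2 hnx),
          inv_mul_cancel₀ (ne_of_gt hnx)]
      have hxu : x = ‖x‖ • u := by
        rw [hu, smul_smul, mul_inv_cancel₀ (ne_of_gt hnx), one_smul]
      have h1 : f x = ‖x‖ ^ 2 * f u := by conv_lhs => rw [hxu, hfh]
      have h2 : g x = ‖x‖ ^ 2 * g u := by conv_lhs => rw [hxu, hgh]
      have h3 : f u ≤ M := hmax hus
      have h4 : m ≤ g u := hmin hus
      rw [h1, h2]
      rw [div_mul_eq_mul_div, le_div_iff₀ hmpos]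
      nlinarith [mul_le_mul_of_nonneg_left h3 (mul_nonneg (sq_nonneg ‖x‖) hmpos.le),
        mul_le_mul_of_nonneg_left h4 (by positivity : (0:ℝ) ≤ (M+1)*‖x‖^2)]
  

lemma poly_integral_pos (u : Polynomial ℝ) (hu : u ≠ 0) (a b : ℝ) (hab : a < b)
    (hnn : ∀ t ∈ Set.Icc a b, 0 ≤ u.eval t) : 0 < ∫ t in a..b, u.eval t := by
  rw [intervalIntegral.integral_of_le hab.le]
  have hcont : Continuous fun t => u.eval t := u.continuous_aeval
  rw [MeasureTheory.setIntegral_pos_iff_support_of_nonneg_ae ?_ ?_]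
  · have hroots : (volume : Measure ℝ) {x | u.IsRoot x} = 0 :=
      (Polynomial.finite_setOf_isRoot hu).measure_zero _
    have hsub : Set.Ioc a b ⊆ (Function.support fun t => u.eval t) ∩ Set.Ioc a b ∪ {x | u.IsRoot x} := by
      intro x hx
      by_cases h : u.eval x = 0
      · exact Or.inr h
      · exact Or.inl ⟨h, hx⟩
    calc (0:ENNReal) < volume (Set.Ioc a b) := by
          simp [Real.volume_Ioc, sub_pos.2 hab]
      _ ≤ _ := le_trans (measure_mono hsub) (by
          refine le_trans (measure_union_le _ _) ?_
          rw [hroots, add_zero])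
  · filter_upwards [ae_restrict_mem measurableSet_Ioc] with x hx
    exact hnn x ⟨le_of_lt hx.1, hx.2⟩
  · exact (hcont.integrableOn_Ioc)

lemma cont_ends (n : ℕ) : Continuous fun x : Fin n → ℝ =>
    ((Ppoly x).eval 0) ^ 2 + ((Ppoly x).eval 1) ^ 2 := by
  simp only [Ppoly_eval]
  fun_prop

lemma cont_l2 (n : ℕ) : Continuous fun x : Fin n → ℝ =>
    ∫ t in (0:ℝ)..1, ((Ppoly x).eval t) ^ 2 := by
  simp only [Ppoly_l2]
  fun_prop

lemma eval_smul_Ppoly {n : ℕ} (t : ℝ) (x : Fin n → ℝ) (s : ℝ) :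
    (Ppoly (t • x)).eval s = t * (Ppoly x).eval s := by
  rw [Ppoly_eval, Ppoly_eval, Finset.mul_sum]
  exact Finset.sum_congr rfl fun i _ => by simp [mul_assoc]

lemma ends_homog {n : ℕ} (t : ℝ) (x : Fin n → ℝ) :
    ((Ppoly (t • x)).eval 0) ^ 2 + ((Ppoly (t • x)).eval 1) ^ 2
      = t ^ 2 * (((Ppoly x).eval 0) ^ 2 + ((Ppoly x).eval 1) ^ 2) := by
  rw [eval_smul_Ppoly, eval_smul_Ppoly]; ring

lemma l2_homog {n : ℕ} (t : ℝ) (x : Fin n → ℝ) :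
    (∫ s in (0:ℝ)..1, ((Ppoly (t • x)).eval s) ^ 2)
      = t ^ 2 * ∫ s in (0:ℝ)..1, ((Ppoly x).eval s) ^ 2 := by
  simp_rw [eval_smul_Ppoly, mul_pow]
  rw [intervalIntegral.integral_const_mul]

lemma l2_pos {n : ℕ} {x : Fin n → ℝ} (hx : x ≠ 0) :
    0 < ∫ t in (0:ℝ)..1, ((Ppoly x).eval t) ^ 2 := by
  simp_rw [← Polynomial.eval_pow]
  exact poly_integral_pos _ (pow_ne_zero _ (Ppoly_ne_zero hx)) 0 1 one_pos
    (fun t _ => by rw [Polynomial.eval_pow]; positivity)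

lemma l2_nonneg (a b : ℝ) (hab : a ≤ b) (u : Polynomial ℝ) :
    0 ≤ ∫ t in a..b, (u.eval t) ^ 2 :=
  intervalIntegral.integral_nonneg hab fun t _ => sq_nonneg _

lemma traceA (k : ℕ) : ∃ C : ℝ, 0 < C ∧ ∀ v : Polynomial ℝ, v.natDegree ≤ k + 1 →
    (v.eval 0) ^ 2 + (v.eval 1) ^ 2 ≤ C * ∫ t in (0:ℝ)..1, (v.eval t) ^ 2 := by
  obtain ⟨C, hC, h⟩ := norm_equiv_aux (k + 2)
    (fun x => ((Ppoly x).eval 0) ^ 2 + ((Ppoly x).eval 1) ^ 2)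
    (fun x => ∫ t in (0:ℝ)..1, ((Ppoly x).eval t) ^ 2)
    (cont_ends _) (cont_l2 _) (fun t x => ends_homog t x) (fun t x => l2_homog t x)
    (fun x => by positivity) (fun x hx => l2_pos hx)
  refine ⟨C, hC, fun v hv => ?_⟩
  have hrep : Ppoly (fun i : Fin (k+2) => v.coeff i) = v :=
    Ppoly_of_coeff v (by omega)
  have := h (fun i : Fin (k+2) => v.coeff i)
  rwa [hrep] at this

lemma Bcore (k : ℕ) (u : Polynomial ℝ) (hu : u ≠ 0) (hdeg : u.natDegree ≤ k + 1)
    (h0 : u.eval 0 = 0) (h1 : u.eval 1 = 0)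
    (horth : ∀ j < k, ∫ t in (0:ℝ)..1, u.eval t * t ^ j = 0) : False := by
  have hd0 : (X - C (0:ℝ)) ∣ u := Polynomial.dvd_iff_isRoot.2 h0
  have hd1 : (X - C (1:ℝ)) ∣ u := Polynomial.dvd_iff_isRoot.2 h1
  have hcop : IsCoprime (X - C (0:ℝ)) (X - C (1:ℝ)) := ⟨1, -1, by simp⟩
  obtain ⟨q, hq⟩ := hcop.mul_dvd hd0 hd1
  have hqne : q ≠ 0 := by rintro rfl; rw [mul_zero] at hq; exact hu hq
  have hfac_ne : ((X - C (0:ℝ)) * (X - C 1)) ≠ 0 :=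
    mul_ne_zero (Polynomial.X_sub_C_ne_zero 0) (Polynomial.X_sub_C_ne_zero 1)
  have hdq : q.natDegree < k := by
    have h2 : ((X - C (0:ℝ)) * (X - C 1)).natDegree = 2 := by
      rw [Polynomial.natDegree_mul (Polynomial.X_sub_C_ne_zero 0) (Polynomial.X_sub_C_ne_zero 1),
        Polynomial.natDegree_X_sub_C, Polynomial.natDegree_X_sub_C]
    rw [hq, Polynomial.natDegree_mul hfac_ne hqne, h2] at hdeg
    omega
  have horthq : ∫ t in (0:ℝ)..1, u.eval t * q.eval t = 0 := by
    have hrep : ∀ t : ℝ, u.eval t * q.eval t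
        = ∑ j ∈ Finset.range k, q.coeff j * (u.eval t * t ^ j) := by
      intro t
      rw [Polynomial.eval_eq_sum_range' hdq t, Finset.mul_sum]
      exact Finset.sum_congr rfl fun j _ => by ring
    simp_rw [hrep]
    rw [intervalIntegral.integral_finset_sum (fun j _ => (by
      have : Continuous fun t : ℝ => u.eval t := u.continuous_aeval
      fun_prop : Continuous fun t : ℝ => q.coeff j * (u.eval t * t ^ j)).intervalIntegrable _ _)]
    refine Finset.sum_eq_zero fun j hj => ?_
    rw [intervalIntegral.integral_const_mul, horth j (Finset.mem_range.1 hj), mul_zero]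
  have hCXne : (C (1:ℝ) - X) ≠ 0 := by
    intro h
    have := congrArg (Polynomial.eval 2) h
    norm_num at this
  have hne2 : (X * (C (1:ℝ) - X) * q ^ 2) ≠ 0 :=
    mul_ne_zero (mul_ne_zero Polynomial.X_ne_zero hCXne) (pow_ne_zero _ hqne)
  have hpos := poly_integral_pos _ hne2 0 1 one_pos (fun t ht => by
    simp only [Polynomial.eval_mul, Polynomial.eval_pow, Polynomial.eval_sub,
      Polynomial.eval_X, Polynomial.eval_C, Polynomial.eval_one]
    have h1t : 0 ≤ 1 - t := by linarith [ht.2]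
    have h0t : 0 ≤ t := ht.1
    positivity)
  have hpt : ∀ t : ℝ, u.eval t * q.eval t = -((X * (C (1:ℝ) - X) * q ^ 2).eval t) := by
    intro t
    rw [hq]
    simp only [Polynomial.eval_mul, Polynomial.eval_pow, Polynomial.eval_sub,
      Polynomial.eval_X, Polynomial.eval_C]
    ring
  rw [show (∫ t in (0:ℝ)..1, u.eval t * q.eval t)
      = -∫ t in (0:ℝ)..1, (X * (C (1:ℝ) - X) * q ^ 2).eval t from by
    simp_rw [hpt]; rw [intervalIntegral.integral_neg]] at horthq
  linarith


def Wsub (k : ℕ) : Submodule ℝ (Fin (k + 2) → ℝ) where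
  carrier := {x | ∀ j < k, ∑ i : Fin (k + 2), x i / ((i : ℕ) + (j : ℕ) + 1) = 0}
  add_mem' := by
    intro a b ha hb j hj
    simp only [Pi.add_apply, add_div, Finset.sum_add_distrib, ha j hj, hb j hj, add_zero]
  zero_mem' := by intro j hj; simp
  smul_mem' := by
    intro c x hx j hj
    simp only [Pi.smul_apply, smul_eq_mul, mul_div_assoc, ← Finset.mul_sum, hx j hj, mul_zero]

lemma mem_Wsub {k : ℕ} {x : Fin (k + 2) → ℝ} :
    x ∈ Wsub k ↔ ∀ j < k, ∑ i : Fin (k + 2), x i / ((i : ℕ) + (j : ℕ) + 1) = 0 :=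
  Iff.rfl

lemma traceB (k : ℕ) : ∃ C : ℝ, 0 < C ∧ ∀ w : Polynomial ℝ, w.natDegree ≤ k + 1 →
    (∀ j < k, ∫ t in (0:ℝ)..1, w.eval t * t ^ j = 0) →
    (∫ t in (0:ℝ)..1, (w.eval t) ^ 2) ≤ C * ((w.eval 0) ^ 2 + (w.eval 1) ^ 2) := by
  set d := Module.finrank ℝ (Wsub k) with hd
  let e : (Wsub k) ≃ₗ[ℝ] (Fin d → ℝ) := (Module.finBasis ℝ (Wsub k)).equivFun
  let T : (Fin d → ℝ) →ₗ[ℝ] (Fin (k + 2) → ℝ) := (Wsub k).subtype.comp e.symm.toLinearMap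
  have hTcont : Continuous T := T.continuous_of_finiteDimensional
  have hTinj : Function.Injective T := (Wsub k).injective_subtype.comp e.symm.injective
  have hTmem : ∀ y, T y ∈ Wsub k := fun y => (e.symm y).2
  obtain ⟨C, hC, h⟩ := norm_equiv_aux d
    (fun y => ∫ t in (0:ℝ)..1, ((Ppoly (T y)).eval t) ^ 2)
    (fun y => ((Ppoly (T y)).eval 0) ^ 2 + ((Ppoly (T y)).eval 1) ^ 2)
    (by exact (cont_l2 (k + 2)).comp hTcont) (by exact (cont_ends (k + 2)).comp hTcont)
    (fun t y => by
      show (∫ s in (0:ℝ)..1, ((Ppoly (T (t • y))).eval s) ^ 2) = _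
      rw [show T (t • y) = t • T y from T.map_smul t y]
      exact l2_homog t (T y))
    (fun t y => by
      show ((Ppoly (T (t • y))).eval 0) ^ 2 + ((Ppoly (T (t • y))).eval 1) ^ 2 = _
      rw [show T (t • y) = t • T y from T.map_smul t y]
      exact ends_homog t (T y))
    (fun y => l2_nonneg 0 1 zero_le_one _)
    (by
      intro y hy
      have hxne : T y ≠ 0 := fun h => hy (hTinj (by rw [h, map_zero]))
      have hmem := hTmem y
      have hnn : 0 ≤ ((Ppoly (T y)).eval 0) ^ 2 + ((Ppoly (T y)).eval 1) ^ 2 := by positivity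
      rcases hnn.lt_or_eq with h' | h'
      · exact h'
      exfalso
      have h0 : (Ppoly (T y)).eval 0 = 0 := by
        nlinarith [sq_nonneg ((Ppoly (T y)).eval 0), sq_nonneg ((Ppoly (T y)).eval 1)]
      have h1 : (Ppoly (T y)).eval 1 = 0 := by
        nlinarith [sq_nonneg ((Ppoly (T y)).eval 0), sq_nonneg ((Ppoly (T y)).eval 1)]
      refine Bcore k (Ppoly (T y)) (Ppoly_ne_zero hxne) (Ppoly_natDegree _) h0 h1 ?_
      intro j hj
      rw [Ppoly_moment]
      exact (mem_Wsub.1 hmem) j hj)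
  refine ⟨C, hC, fun w hw horth => ?_⟩
  set x : Fin (k + 2) → ℝ := fun i => w.coeff i with hxdef
  have hrep : Ppoly x = w := Ppoly_of_coeff w (by omega)
  have hxW : x ∈ Wsub k := by
    rw [mem_Wsub]
    intro j hj
    rw [← Ppoly_moment x j, hrep]
    exact horth j hj
  have hfin := h (e ⟨x, hxW⟩)
  have hT : T (e ⟨x, hxW⟩) = x := by
    show ((e.symm (e ⟨x, hxW⟩) : Wsub k) : Fin (k + 2) → ℝ) = x
    rw [e.symm_apply_apply]
  rw [hT, hrep] at hfin
  exact hfin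

/-- Equation (3.10): on a segment `E = (a,b)` of length `h_E = b − a`, the quantity
`N(v)² = ‖π_E^{k−1}v‖²_{L²(E)} + h_E(|v(a)|² + |v(b)|²)` defines a norm on `ℙ^{k+1}(E)`
uniformly equivalent to the `L²(E)`-norm, with constants depending only on `k`.
Here `p` is the `L²(E)`-orthogonal projection of `v` onto `ℙ^{k−1}(E)` (the zero space
for `k = 0`, encoded by `degree p < k`). -/
theorem stmt_9 (k : ℕ) :
    ∃ c C : ℝ, 0 < c ∧ 0 < C ∧
      ∀ a b : ℝ, a < b →
        ∀ v p : Polynomial ℝ, v.natDegree ≤ k + 1 → p.degree < (k : WithBot ℕ) →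
          (∀ r : Polynomial ℝ, r.degree < (k : WithBot ℕ) →
            ∫ x in a..b, (v.eval x - p.eval x) * r.eval x = 0) →
          (c * ∫ x in a..b, (v.eval x) ^ 2 ≤
              (∫ x in a..b, (p.eval x) ^ 2) + (b - a) * ((v.eval a) ^ 2 + (v.eval b) ^ 2)) ∧
          ((∫ x in a..b, (p.eval x) ^ 2) + (b - a) * ((v.eval a) ^ 2 + (v.eval b) ^ 2) ≤
              C * ∫ x in a..b, (v.eval x) ^ 2) ∧
          (v ≠ 0 →
            0 < (∫ x in a..b, (p.eval x) ^ 2) + (b - a) * ((v.eval a) ^ 2 + (v.eval b) ^ 2)) := by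
  obtain ⟨CA, hCA0, hCA⟩ := traceA k
  obtain ⟨CB, hCB0, hCB⟩ := traceB k
  set K : ℝ := 1 + 2 * CB + 2 * CA * CB with hK
  have hK0 : 0 < K := by positivity
  refine ⟨K⁻¹, 1 + CA, by positivity, by positivity, fun a b hab v p hv hp horth => ?_⟩
  set h : ℝ := b - a with hhdef
  have hh : 0 < h := by simp [hhdef, hab]
  have hne : h ≠ 0 := ne_of_gt hh
  set σ : Polynomial ℝ := C h * X + C a with hσ
  have hσd : σ.natDegree = 1 := Polynomial.natDegree_linear hne
  -- change of variables
  have key : ∀ u : Polynomial ℝ,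
      (∫ y in a..b, u.eval y) = h * ∫ t in (0:ℝ)..1, (u.comp σ).eval t := by
    intro u
    have h2 : ∀ t : ℝ, (u.comp σ).eval t = u.eval (h * t + a) := by
      intro t; rw [Polynomial.eval_comp]; simp [hσ]
    have hcv := intervalIntegral.integral_comp_mul_add (a := 0) (b := 1)
      (fun y => u.eval y) hne a
    simp only [mul_zero, zero_add, mul_one, smul_eq_mul] at hcv
    rw [show h + a = b by simp [hhdef]] at hcv
    simp_rw [h2, hcv]
    field_simp
  have keysq : ∀ u : Polynomial ℝ,
      (∫ y in a..b, (u.eval y) ^ 2) = h * ∫ t in (0:ℝ)..1, ((u.comp σ).eval t) ^ 2 := by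
    intro u
    have := key (u ^ 2)
    simpa only [Polynomial.eval_pow, Polynomial.pow_comp] using this
  have hdeg_comp : ∀ u : Polynomial ℝ, u.natDegree ≤ k + 1 → (u.comp σ).natDegree ≤ k + 1 := by
    intro u hu
    rw [Polynomial.natDegree_comp, hσd, mul_one]; exact hu
  have heval0 : ∀ u : Polynomial ℝ, (u.comp σ).eval 0 = u.eval a := by
    intro u; rw [Polynomial.eval_comp]; simp [hσ]
  have heval1 : ∀ u : Polynomial ℝ, (u.comp σ).eval 1 = u.eval b := by
    intro u; rw [Polynomial.eval_comp]; simp [hσ, hhdef]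
  -- scaled trace inequality
  have hA : ∀ u : Polynomial ℝ, u.natDegree ≤ k + 1 →
      h * ((u.eval a) ^ 2 + (u.eval b) ^ 2) ≤ CA * ∫ x in a..b, (u.eval x) ^ 2 := by
    intro u hu
    have t1 := hCA (u.comp σ) (hdeg_comp u hu)
    rw [heval0 u, heval1 u] at t1
    have t2 := mul_le_mul_of_nonneg_left t1 hh.le
    calc h * ((u.eval a) ^ 2 + (u.eval b) ^ 2)
        ≤ h * (CA * ∫ t in (0:ℝ)..1, ((u.comp σ).eval t) ^ 2) := t2
      _ = CA * (h * ∫ t in (0:ℝ)..1, ((u.comp σ).eval t) ^ 2) := by ring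
      _ = CA * ∫ x in a..b, (u.eval x) ^ 2 := by rw [← keysq u]
  -- degree of p
  have hpd : p.natDegree ≤ k + 1 := by
    rw [Polynomial.natDegree_le_iff_degree_le]
    calc p.degree ≤ (k : WithBot ℕ) := le_of_lt hp
      _ ≤ ((k + 1 : ℕ) : WithBot ℕ) := by exact_mod_cast Nat.le_succ k
  have hwd : (v - p).natDegree ≤ k + 1 :=
    le_trans (Polynomial.natDegree_sub_le v p) (by simp [hv, hpd])
  -- continuity facts
  have hcv' : Continuous fun x : ℝ => v.eval x := v.continuous_aeval
  have hcp' : Continuous fun x : ℝ => p.eval x := p.continuous_aeval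
  -- Pythagoras
  have hperp : ∫ x in a..b, (v.eval x - p.eval x) * p.eval x = 0 := horth p hp
  have hpyth : (∫ x in a..b, (v.eval x) ^ 2)
      = (∫ x in a..b, (p.eval x) ^ 2) + ∫ x in a..b, (v.eval x - p.eval x) ^ 2 := by
    have h1 : ∀ x : ℝ, (v.eval x) ^ 2
        = ((p.eval x) ^ 2 + (v.eval x - p.eval x) ^ 2)
          + 2 * ((v.eval x - p.eval x) * p.eval x) := fun x => by ring
    simp_rw [h1]
    rw [intervalIntegral.integral_add (Continuous.intervalIntegrable (by fun_prop) _ _)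
        (Continuous.intervalIntegrable (by fun_prop) _ _),
      intervalIntegral.integral_add (Continuous.intervalIntegrable (by fun_prop) _ _)
        (Continuous.intervalIntegrable (by fun_prop) _ _),
      intervalIntegral.integral_const_mul, hperp]
    ring
  have hIWnn : 0 ≤ ∫ x in a..b, (v.eval x - p.eval x) ^ 2 :=
    intervalIntegral.integral_nonneg hab.le fun x _ => sq_nonneg _
  have hIPnn : 0 ≤ ∫ x in a..b, (p.eval x) ^ 2 :=
    intervalIntegral.integral_nonneg hab.le fun x _ => sq_nonneg _
  have hSVnn : 0 ≤ h * ((v.eval a) ^ 2 + (v.eval b) ^ 2) := by positivity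
  -- transferred orthogonality for w-hat
  have horthW : ∀ j < k, ∫ t in (0:ℝ)..1, ((v - p).comp σ).eval t * t ^ j = 0 := by
    intro j hj
    set r : Polynomial ℝ := (C h⁻¹ * (X - C a)) ^ j with hr
    have hrd : r.degree < (k : WithBot ℕ) := by
      rw [hr, Polynomial.degree_pow, Polynomial.degree_C_mul (inv_ne_zero hne),
        Polynomial.degree_X_sub_C]
      rw [nsmul_eq_mul, mul_one]
      exact_mod_cast hj
    have h0 := horth r hrd
    have hcomp : r.comp σ = X ^ j := by
      rw [hr, Polynomial.pow_comp, Polynomial.mul_comp, Polynomial.sub_comp,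
        Polynomial.X_comp, Polynomial.C_comp, Polynomial.C_comp, hσ]
      congr 1
      rw [add_sub_cancel_right, ← mul_assoc, ← Polynomial.C_mul,
        inv_mul_cancel₀ hne, Polynomial.C_1, one_mul]
    have hmul := key ((v - p) * r)
    simp only [Polynomial.eval_mul, Polynomial.eval_sub, Polynomial.mul_comp] at hmul
    rw [h0, hcomp] at hmul
    simp only [Polynomial.eval_pow, Polynomial.eval_X] at hmul
    rcases mul_eq_zero.mp hmul.symm with h' | h'
    · exact absurd h' hne
    · exact h'
  -- scaled B inequality
  have hBineq : (∫ x in a..b, (v.eval x - p.eval x) ^ 2)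
      ≤ CB * (h * (((v - p).eval a) ^ 2 + ((v - p).eval b) ^ 2)) := by
    have t1 := hCB ((v - p).comp σ) (hdeg_comp _ hwd) horthW
    rw [heval0, heval1] at t1
    have t2 := mul_le_mul_of_nonneg_left t1 hh.le
    have heq : (∫ x in a..b, (v.eval x - p.eval x) ^ 2)
        = h * ∫ t in (0:ℝ)..1, (((v - p).comp σ).eval t) ^ 2 := by
      have := keysq (v - p)
      simpa only [Polynomial.eval_sub] using this
    rw [heq]
    calc h * ∫ t in (0:ℝ)..1, (((v - p).comp σ).eval t) ^ 2
        ≤ h * (CB * (((v - p).eval a) ^ 2 + ((v - p).eval b) ^ 2)) := t2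
      _ = CB * (h * (((v - p).eval a) ^ 2 + ((v - p).eval b) ^ 2)) := by ring
  have hAv := hA v hv
  have hAp := hA p hpd
  have hevsub : ∀ x : ℝ, (v - p).eval x = v.eval x - p.eval x := fun x => by
    simp [Polynomial.eval_sub]
  rw [hevsub a, hevsub b] at hBineq
  have hIW : (∫ x in a..b, (v.eval x - p.eval x) ^ 2)
      ≤ 2 * CB * (h * ((v.eval a) ^ 2 + (v.eval b) ^ 2))
        + 2 * CA * CB * ∫ x in a..b, (p.eval x) ^ 2 := by
    have hsq : ((v.eval a - p.eval a) ^ 2 + (v.eval b - p.eval b) ^ 2)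
        ≤ 2 * ((v.eval a) ^ 2 + (v.eval b) ^ 2) + 2 * ((p.eval a) ^ 2 + (p.eval b) ^ 2) := by
      nlinarith [sq_nonneg (v.eval a + p.eval a), sq_nonneg (v.eval b + p.eval b)]
    nlinarith [mul_le_mul_of_nonneg_left hsq (mul_nonneg hCB0.le hh.le), hAp,
      mul_le_mul_of_nonneg_left hAp hCB0.le]
  have hIV : (∫ x in a..b, (v.eval x) ^ 2)
      ≤ K * ((∫ x in a..b, (p.eval x) ^ 2) + h * ((v.eval a) ^ 2 + (v.eval b) ^ 2)) := by
    rw [hpyth, hK]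
    nlinarith [hIW, hIPnn, hSVnn,
      mul_nonneg (mul_nonneg (by norm_num : (0:ℝ) ≤ 2) hCA0.le) hCB0.le]
  have hlow : K⁻¹ * (∫ x in a..b, (v.eval x) ^ 2)
      ≤ (∫ x in a..b, (p.eval x) ^ 2) + h * ((v.eval a) ^ 2 + (v.eval b) ^ 2) := by
    calc K⁻¹ * ∫ x in a..b, (v.eval x) ^ 2
        ≤ K⁻¹ * (K * ((∫ x in a..b, (p.eval x) ^ 2) + h * ((v.eval a) ^ 2 + (v.eval b) ^ 2))) :=
          mul_le_mul_of_nonneg_left hIV (inv_nonneg.mpr hK0.le)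
      _ = (∫ x in a..b, (p.eval x) ^ 2) + h * ((v.eval a) ^ 2 + (v.eval b) ^ 2) := by
          field_simp
  have hba : (b - a) * ((v.eval a) ^ 2 + (v.eval b) ^ 2)
      = h * ((v.eval a) ^ 2 + (v.eval b) ^ 2) := by rw [hhdef]
  refine ⟨?_, ?_, ?_⟩
  · rw [hba]; exact hlow
  · have hIP : (∫ x in a..b, (p.eval x) ^ 2) ≤ ∫ x in a..b, (v.eval x) ^ 2 := by
      rw [hpyth]; linarith
    rw [hba]
    linarith [hAv]
  · intro hvne
    have hIVpos : 0 < ∫ x in a..b, (v.eval x) ^ 2 := by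
      simp_rw [← Polynomial.eval_pow]
      exact poly_integral_pos _ (pow_ne_zero _ hvne) a b hab
        (fun t _ => by rw [Polynomial.eval_pow]; positivity)
    rw [hba]
    calc (0:ℝ) < K⁻¹ * ∫ x in a..b, (v.eval x) ^ 2 := by positivity
      _ ≤ _ := hlow
end

section
/- Adjoint-consistency cancellation: Let V^{i−1}, V^i, V^{i+1} be inner product spaces (L²-spaces of forms) with differentials d^{i−1}, d^i, and let 𝔻^{i−1}, 𝔻^i, 𝔻^{i+1} be inner product spaces with discrete differentials 𝔡^{i−1}, 𝔡^i, with interpolators σ^j satisfying the commutation σ^i ∘ d^{i−1} = 𝔡^{i−1} ∘ σ^{i−1} (on a domain where defined). Suppose (u, p) satisfy u = δ^i p and g = d^{i−1}u + δ^{i+1}d^i p (where δ are the codifferentials), and set ℓ(q) = (σ^i g, q)_i. Define a((w,r),(v,q)) = (w,v)_{i−1} − (r, 𝔡^{i−1}v)_i + (𝔡^{i−1}w, q)_i + (𝔡^i r, 𝔡^i q)_{i+1}, and the consistency error E(v,q) = ℓ(q) − a((σ^{i−1}u, σ^i p),(v,q)). Then E(v,q) = Ẽ^i(d^i p; q) −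 Ẽ^{i−1}(p; v), where Ẽ^j(ω; w) := (σ^j δ^{j+1} ω, w)_j − (σ^{j+1} ω, 𝔡^j w)_{j+1}. -/
open RealInnerProductSpace

/-- Adjoint-consistency cancellation (Appendix B): the consistency error of the discrete
Hodge-Laplacian splits as the difference of two adjoint consistency errors. -/
theorem stmt_14
    (Vim1 Vi Vip1 Dim1 Di Dip1 : Type*)
    [NormedAddCommGroup Vim1] [InnerProductSpace ℝ Vim1]
    [NormedAddCommGroup Vi] [InnerProductSpace ℝ Vi]
    [NormedAddCommGroup Vip1] [InnerProductSpace ℝ Vip1]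
    [NormedAddCommGroup Dim1] [InnerProductSpace ℝ Dim1]
    [NormedAddCommGroup Di] [InnerProductSpace ℝ Di]
    [NormedAddCommGroup Dip1] [InnerProductSpace ℝ Dip1]
    (dim1 : Vim1 →ₗ[ℝ] Vi) (di : Vi →ₗ[ℝ] Vip1)
    (δi : Vi →ₗ[ℝ] Vim1) (δip1 : Vip1 →ₗ[ℝ] Vi)
    (𝔡im1 : Dim1 →ₗ[ℝ] Di) (𝔡i : Di →ₗ[ℝ] Dip1)
    (σim1 : Vim1 →ₗ[ℝ] Dim1) (σi : Vi →ₗ[ℝ] Di) (σip1 : Vip1 →ₗ[ℝ] Dip1)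
    (hcomm1 : ∀ v : Vim1, σi (dim1 v) = 𝔡im1 (σim1 v))
    (hcomm2 : ∀ v : Vi, σip1 (di v) = 𝔡i (σi v))
    (u : Vim1) (p : Vi) (g : Vi)
    (hu : u = δi p) (hg : g = dim1 u + δip1 (di p)) :
    ∀ (v : Dim1) (q : Di),
      ⟪σi g, q⟫ -
        (⟪σim1 u, v⟫ - ⟪σi p, 𝔡im1 v⟫ + ⟪𝔡im1 (σim1 u), q⟫ + ⟪𝔡i (σi p), 𝔡i q⟫) =
      (⟪σi (δip1 (di p)), q⟫ - ⟪σip1 (di p), 𝔡i q⟫) -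
        (⟪σim1 (δi p), v⟫ - ⟪σi p, 𝔡im1 v⟫) := by
  intro v q
  subst hu hg
  simp [map_add, inner_add_left, hcomm1, hcomm2]
  ring
end
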